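/- arXiv:1502.05014 — 2 statements merged into one kernel-verified Lean document; each statement's English description precedes it below -/
import Mathlib

section
/- Let I be a monomial ideal in A = K[x_1,...,x_n] containing P + J, where P = (x_1^{e_1},...,x_r^{e_r}) with 2 ≤ e_1 ≤ ... ≤ e_r and J strongly stable. Fix variables a >_lex b, let I' be the ideal generated by all minimal generators of I except b^{e_b} (if b^{e_b} is a minimal generator), let T' be the {a,b}-compression of I', and set T = T' + P. Then J ⊆ T. -/
open Finsupp

/-- A monomial in `n` variables, recorded by its exponent vector.
Variable `x_1` corresponds to index `0`, and `x_1 > x_2 > ... > x_n`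
in the lexicographic variable order, so `a >_lex b` means `a < b` as indices. -/
abbrev Mon (n : ℕ) := Fin n →₀ ℕ

/-- The set of monomials of a monomial ideal: closed under multiplication by monomials. -/
def IsMonSet {n : ℕ} (S : Set (Mon n)) : Prop :=
  ∀ m ∈ S, ∀ f : Mon n, m + f ∈ S

/-- Strongly stable: if `x_i · m ∈ S` and `j < i` then `x_j · m ∈ S`. -/
def StronglyStable {n : ℕ} (S : Set (Mon n)) : Prop :=
  ∀ m : Mon n, ∀ i j : Fin n, j < i →
    m + Finsupp.single i 1 ∈ S → m + Finsupp.single j 1 ∈ S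

/-- Total degree of a monomial. -/
def mdeg {n : ℕ} (m : Mon n) : ℕ := m.sum fun _ e => e

/-- `u >_lex v` : at the first variable where they differ, `u` has the larger exponent. -/
def LexGT {n : ℕ} (u v : Mon n) : Prop :=
  ∃ i : Fin n, v i < u i ∧ ∀ j : Fin n, j < i → u j = v j

/-- The number of monomials of degree `d` in the fiber ideal `V_f ⊂ K[a,b]` of `I`. -/
noncomputable def fiberCount {n : ℕ} (I : Set (Mon n)) (a b : Fin n) (f : Mon n) (d : ℕ) : ℕ :=
  Set.ncard {q : ℕ | ∃ p, p + q = d ∧ f + Finsupp.single a p + Finsupp.single b q ∈ I}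

/-- The `{a,b}`-compression of `I`. -/
def Compress {n : ℕ} (I : Set (Mon n)) (a b : Fin n) : Set (Mon n) :=
  {g | ∃ (f : Mon n) (p q : ℕ), f a = 0 ∧ f b = 0 ∧
    g = f + Finsupp.single a p + Finsupp.single b q ∧ q < fiberCount I a b f (p + q)}

/-- The extension of a set of monomials to a monomial ideal:
all monomials divisible by some member. -/
def extIdeal {n : ℕ} (L : Set (Mon n)) : Set (Mon n) :=
  {g | ∃ m ∈ L, ∀ k, m k ≤ g k}

/-- The minimal (monomial) generators of a monomial ideal. -/
def minGens {n : ℕ} (I : Set (Mon n)) : Set (Mon n) :=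
  {m ∈ I | ∀ m' ∈ I, (∀ k, m' k ≤ m k) → m' = m}

/-- The monomial set of `P = (x_1^{e_1}, ..., x_r^{e_r})`. -/
def powersIdeal {n : ℕ} (e : Fin n → ℕ) (r : ℕ) : Set (Mon n) :=
  {m : Mon n | ∃ i : Fin n, (i : ℕ) < r ∧ e i ≤ m i}

/-!
A monomial `m = f a^p b^q` of `J` outside `P` has `q < e_b`. Strong stability trades powers of
`b` for powers of `a`, so `f a^(p+q-j) b^j ∈ J ⊆ I` for every `j ≤ q`; none of these is divisible
by `b^(e_b)`, so each is divisible by a minimal generator of `I` other than `b^(e_b)`. Hence the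
degree `p + q` part of the fiber of `I'` over `f` has at least `q + 1` monomials, and the lex
ideal with that Hilbert function contains `a^p b^q`.
-/

lemma exists_mem_minGens_le {n : ℕ} {I : Set (Mon n)} {m : Mon n} (hm : m ∈ I) :
    ∃ g ∈ minGens I, g ≤ m := by
  obtain ⟨g, ⟨hgI, hgm⟩, hmin⟩ :=
    wellFounded_lt.has_min {g | g ∈ I ∧ g ≤ m} ⟨m, hm, le_rfl⟩
  refine ⟨g, ⟨hgI, fun g' hg'I hg'g => ?_⟩, hgm⟩
  have hle : g' ≤ g := Finsupp.le_def.mpr hg'g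
  exact hle.eq_of_not_lt (hmin g' ⟨hg'I, hle.trans hgm⟩)

lemma mem_extIdeal_minGens_diff_single {n : ℕ} {I : Set (Mon n)} {m : Mon n} (hm : m ∈ I)
    {b : Fin n} {d : ℕ} (hmb : m b < d) :
    m ∈ extIdeal (minGens I \ {single b d}) := by
  obtain ⟨g, hg, hgm⟩ := exists_mem_minGens_le hm
  refine ⟨g, ⟨hg, fun hgb => ?_⟩, Finsupp.le_def.mp hgm⟩
  have := hgm b
  rw [Set.mem_singleton_iff.mp hgb, single_eq_same] at this
  omega

lemma StronglyStable.add_single_of_add_single {n : ℕ} {J : Set (Mon n)} (hJ : StronglyStable J)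
    {a b : Fin n} (hab : a < b) (t : ℕ) :
    ∀ m : Mon n, m + single b t ∈ J → m + single a t ∈ J := by
  induction t with
  | zero => simp
  | succ t ih =>
    intro m hm
    rw [Nat.add_comm, single_add] at hm ⊢
    rw [← add_assoc]
    apply ih
    rw [add_right_comm]
    exact hJ _ b a hab (by rwa [add_right_comm, add_assoc])

lemma exists_eq_add_single_add_single {n : ℕ} (m : Mon n) {a b : Fin n} (hab : a ≠ b) :
    ∃ f : Mon n, f a = 0 ∧ f b = 0 ∧ m = f + single a (m a) + single b (m b) := by
  refine ⟨(m.erase a).erase b, by simp [hab], by simp, ?_⟩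
  ext k
  by_cases hka : k = a
  · subst hka; simp [hab]
  · by_cases hkb : k = b
    · subst hkb; simp [Ne.symm hab]
    · simp [hka, hkb]

lemma add_single_add_single_mem_compress {n : ℕ} {L : Set (Mon n)} {a b : Fin n} {f : Mon n}
    (hfa : f a = 0) (hfb : f b = 0) {p q : ℕ}
    (h : ∀ j ≤ q, f + single a (p + q - j) + single b j ∈ L) :
    f + single a p + single b q ∈ Compress L a b := by
  refine ⟨f, p, q, hfa, hfb, rfl, ?_⟩
  have hsub : Set.Iic q ⊆
      {j | ∃ i, i + j = p + q ∧ f + single a i + single b j ∈ L} :=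
    fun j hj => ⟨p + q - j, by simp at hj; omega, h j hj⟩
  have hfin : {j | ∃ i, i + j = p + q ∧ f + single a i + single b j ∈ L}.Finite :=
    (Set.finite_Iic (p + q)).subset fun j ⟨i, hij, _⟩ => by simp; omega
  calc q < (Set.Iic q).ncard := by
        rw [← Finset.coe_Iic, Set.ncard_coe_finset, Nat.card_Iic]; omega
    _ ≤ fiberCount L a b f (p + q) := Set.ncard_le_ncard hsub hfin

theorem stmt6_general {n : ℕ} (r : ℕ) (e : Fin n → ℕ)
    (I J : Set (Mon n))
    (hss : StronglyStable J) (hJI : J ⊆ I)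
    (a b : Fin n) (hab : a < b) (hbr : (b : ℕ) < r) :
    J ⊆ Compress (extIdeal (minGens I \ {Finsupp.single b (e b)})) a b ∪
      powersIdeal e r := by
  intro m hm
  by_cases hmP : m ∈ powersIdeal e r
  · exact Or.inr hmP
  have hmb : m b < e b := not_le.mp fun h => hmP ⟨b, hbr, h⟩
  obtain ⟨f, hfa, hfb, hmf⟩ := exists_eq_add_single_add_single m hab.ne
  refine Or.inl (hmf ▸ add_single_add_single_mem_compress hfa hfb fun j hj => ?_)
  refine mem_extIdeal_minGens_diff_single (hJI ?_) (by simp [hfb, hab.ne]; omega)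
  have hshift : f + single a (m a) + single b j + single b (m b - j) ∈ J := by
    rwa [add_assoc _ (single b j), ← single_add, Nat.add_sub_cancel' hj, ← hmf]
  have := hss.add_single_of_add_single hab _ _ hshift
  rwa [add_right_comm, add_assoc f, ← single_add, ← Nat.add_sub_assoc hj] at this

/-- Let `I ⊇ P + J` be a monomial ideal with `J` strongly stable, let `I'` be generated by
all minimal generators of `I` except `b^{e_b}`, let `T'` be the `{a,b}`-compression of `I'`
and `T = T' + P`.  Then `J ⊆ T`. -/
theorem stmt6 {n : ℕ} (r : ℕ) (hrn : r ≤ n) (e : Fin n → ℕ)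
    (he2 : ∀ i : Fin n, (i : ℕ) < r → 2 ≤ e i)
    (hemono : ∀ i j : Fin n, i ≤ j → (j : ℕ) < r → e i ≤ e j)
    (I J : Set (Mon n)) (hImon : IsMonSet I) (hJmon : IsMonSet J)
    (hss : StronglyStable J) (hPI : powersIdeal e r ⊆ I) (hJI : J ⊆ I)
    (a b : Fin n) (hab : a < b) (hbr : (b : ℕ) < r) :
    J ⊆ Compress (extIdeal (minGens I \ {Finsupp.single b (e b)})) a b ∪
      powersIdeal e r :=
  stmt6_general r e I J hss hJI a b hab hbr
end

section
/- The {a,b}-compression of a monomial ideal I in K[x_1,...,x_n] is a monomial ideal with the same Hilbert function as I. -/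
open Finsupp

/-!
Write a monomial as `f · a^p · b^q` with `f` free of `a` and `b`. Over each pair `(f, e)`, both
`I` and its compression consist of the monomials `f · a^(e-q) · b^q` with `q` in a set of
b-exponents: for `I` the degree-`e` part `W` of the fiber ideal `V_f`, for the compression the
initial segment `{0, …, |W| - 1}`. Fibers of equal size over every `(f, e)` give equal Hilbert
functions.

The compression is closed under multiplication by a variable: multiplying by `a`, or by a variable
outside `{a, b}`, only enlarges `W`, and multiplying by `b` sends the largest exponent `q ∈ W` to
`q + 1`, which lies in the degree-`(e + 1)` part but not in `W`, so that part is strictly larger.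
-/

section FiberCardinality

variable {α β : Type*}

def interPreimageEquivSigma (π : α → β) (S : Set α) (B : Set β) :
    ↥(S ∩ π ⁻¹' B) ≃ Σ y : B, ↥(S ∩ π ⁻¹' {(y : β)}) where
  toFun x := ⟨⟨π x, x.2.2⟩, x, x.2.1, rfl⟩
  invFun p := ⟨p.2, p.2.2.1, (congrArg (· ∈ B) (p.2.2.2 : π p.2 = p.1)).mpr p.1.2⟩
  left_inv _ := rfl
  right_inv p := Sigma.subtype_ext (Subtype.ext p.2.2.2) rfl

theorem ncard_inter_preimage_eq_of_ncard_fiber_eq (π : α → β) {S S' : Set α} {B : Set β}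
    (hS : ∀ y ∈ B, (S ∩ π ⁻¹' {y}).Finite) (hS' : ∀ y ∈ B, (S' ∩ π ⁻¹' {y}).Finite)
    (h : ∀ y ∈ B, (S ∩ π ⁻¹' {y}).ncard = (S' ∩ π ⁻¹' {y}).ncard) :
    (S ∩ π ⁻¹' B).ncard = (S' ∩ π ⁻¹' B).ncard := by
  have fiberEquiv (y : B) : ↥(S ∩ π ⁻¹' {(y : β)}) ≃ ↥(S' ∩ π ⁻¹' {(y : β)}) := by
    have := (hS y y.2).to_subtype
    have := (hS' y y.2).to_subtype
    exact (Finite.card_eq.mp (h y y.2)).some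
  rw [← Nat.card_coe_set_eq, ← Nat.card_coe_set_eq]
  exact Nat.card_congr ((interPreimageEquivSigma π S B).trans
    ((Equiv.sigmaCongrRight fiberEquiv).trans (interPreimageEquivSigma π S' B).symm))

end FiberCardinality

section Monomials

variable {n : ℕ}

theorem mdeg_add (u v : Mon n) : mdeg (u + v) = mdeg u + mdeg v :=
  map_add degree u v

theorem mdeg_single (i : Fin n) (k : ℕ) : mdeg (single i k) = k :=
  degree_single i k

theorem isMonSet_iff_add_single_one_mem {S : Set (Mon n)} :
    IsMonSet S ↔ ∀ m ∈ S, ∀ i, m + single i 1 ∈ S := by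
  refine ⟨fun hS m hm i => hS m hm _, fun h => ?_⟩
  have add_single_mem : ∀ m ∈ S, ∀ i k, m + single i k ∈ S := by
    intro m hm i k
    induction k with
    | zero => simpa using hm
    | succ k ih => simpa [single_add, add_assoc] using h _ ih i
  intro m hm f
  induction f using Finsupp.induction with
  | zero => simpa using hm
  | single_add i k f _ _ ih =>
    rw [add_comm (single i k), ← add_assoc]
    exact add_single_mem _ ih i k

end Monomials

section Compression

variable {n : ℕ} {a b : Fin n}

noncomputable def eraseAB (a b : Fin n) (m : Mon n) : Mon n := (m.erase a).erase b

@[simp]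
theorem eraseAB_apply_left (m : Mon n) : eraseAB a b m a = 0 := by
  by_cases hab : a = b <;> simp [eraseAB, hab]

@[simp]
theorem eraseAB_apply_right (m : Mon n) : eraseAB a b m b = 0 := by
  simp [eraseAB]

theorem eraseAB_add_single_add_single_eq_self (hab : a ≠ b) (m : Mon n) :
    eraseAB a b m + single a (m a) + single b (m b) = m := by
  ext j
  by_cases hja : j = a
  · subst hja; simp [eraseAB, hab]
  · by_cases hjb : j = b
    · subst hjb; simp [eraseAB, hja]
    · simp [eraseAB, hja, hjb]

theorem add_single_add_single_apply_left (hab : a ≠ b) {f : Mon n} (hfa : f a = 0) (p q : ℕ) :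
    (f + single a p + single b q) a = p := by
  simp [hfa, hab]

theorem add_single_add_single_apply_right (hab : a ≠ b) {f : Mon n} (hfb : f b = 0) (p q : ℕ) :
    (f + single a p + single b q) b = q := by
  simp [hfb, hab]

theorem eraseAB_add_single_add_single {f : Mon n} (hfa : f a = 0) (hfb : f b = 0) (p q : ℕ) :
    eraseAB a b (f + single a p + single b q) = f := by
  ext j
  by_cases hjb : j = b
  · subst hjb; simp [eraseAB, erase_apply, hfb]
  by_cases hja : j = a
  · subst hja; simp [eraseAB, hjb, hfa]
  simp [eraseAB, hja, hjb]

theorem mdeg_eq_mdeg_eraseAB_add (hab : a ≠ b) (m : Mon n) :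
    mdeg m = mdeg (eraseAB a b m) + (m a + m b) := by
  conv_lhs => rw [← eraseAB_add_single_add_single_eq_self hab m]
  rw [mdeg_add, mdeg_add, mdeg_single, mdeg_single, add_assoc]

/-- The `b`-exponents of the degree-`e` monomials of the fiber ideal `V_f`. -/
def fiberSlice (I : Set (Mon n)) (a b : Fin n) (f : Mon n) (e : ℕ) : Set ℕ :=
  {q | ∃ p, p + q = e ∧ f + single a p + single b q ∈ I}

variable {I : Set (Mon n)} {f : Mon n} {e : ℕ}

theorem fiberCount_eq_ncard_fiberSlice : fiberCount I a b f e = (fiberSlice I a b f e).ncard :=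
  rfl

theorem fiberSlice_subset_Iic : fiberSlice I a b f e ⊆ Set.Iic e := by
  rintro q ⟨p, rfl, -⟩
  exact Set.mem_Iic.mpr (Nat.le_add_left q p)

theorem fiberSlice_finite : (fiberSlice I a b f e).Finite :=
  (Set.finite_Iic e).subset fiberSlice_subset_Iic

theorem fiberCount_le_succ : fiberCount I a b f e ≤ e + 1 :=
  (Set.ncard_le_ncard fiberSlice_subset_Iic (Set.finite_Iic e)).trans_eq (Set.ncard_Iic_nat e)

theorem mem_iff_mem_fiberSlice (hab : a ≠ b) (m : Mon n) :
    m ∈ I ↔ m b ∈ fiberSlice I a b (eraseAB a b m) (m a + m b) := by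
  constructor
  · intro hm
    exact ⟨m a, rfl, by rwa [eraseAB_add_single_add_single_eq_self hab]⟩
  · rintro ⟨p, hp, hm⟩
    obtain rfl : p = m a := by omega
    rwa [eraseAB_add_single_add_single_eq_self hab] at hm

theorem mem_compress_iff (hab : a ≠ b) (g : Mon n) :
    g ∈ Compress I a b ↔ g b < fiberCount I a b (eraseAB a b g) (g a + g b) := by
  constructor
  · rintro ⟨f, p, q, hfa, hfb, rfl, hq⟩
    rwa [eraseAB_add_single_add_single hfa hfb, add_single_add_single_apply_left hab hfa,
      add_single_add_single_apply_right hab hfb]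
  · intro hg
    exact ⟨eraseAB a b g, g a, g b, eraseAB_apply_left g, eraseAB_apply_right g,
      (eraseAB_add_single_add_single_eq_self hab g).symm, hg⟩

section IdealFibers

variable (hI : IsMonSet I)
include hI

theorem fiberSlice_subset_fiberSlice_succ : fiberSlice I a b f e ⊆ fiberSlice I a b f (e + 1) := by
  rintro q ⟨p, rfl, hq⟩
  refine ⟨p + 1, by omega, ?_⟩
  convert hI _ hq (single a 1) using 1
  rw [single_add]
  abel

theorem add_one_mem_fiberSlice_succ {q : ℕ} (hq : q ∈ fiberSlice I a b f e) :
    q + 1 ∈ fiberSlice I a b f (e + 1) := by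
  obtain ⟨p, rfl, hq⟩ := hq
  refine ⟨p, by omega, ?_⟩
  convert hI _ hq (single b 1) using 1
  rw [single_add]
  abel

theorem fiberSlice_subset_fiberSlice_add_single (i : Fin n) :
    fiberSlice I a b f e ⊆ fiberSlice I a b (f + single i 1) e := by
  rintro q ⟨p, hpq, hq⟩
  refine ⟨p, hpq, ?_⟩
  convert hI _ hq (single i 1) using 1
  abel

theorem fiberCount_le_fiberCount_succ : fiberCount I a b f e ≤ fiberCount I a b f (e + 1) :=
  Set.ncard_le_ncard (fiberSlice_subset_fiberSlice_succ hI) fiberSlice_finite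

theorem fiberCount_le_fiberCount_add_single (i : Fin n) :
    fiberCount I a b f e ≤ fiberCount I a b (f + single i 1) e :=
  Set.ncard_le_ncard (fiberSlice_subset_fiberSlice_add_single hI i) fiberSlice_finite

theorem fiberCount_lt_fiberCount_succ (h : 0 < fiberCount I a b f e) :
    fiberCount I a b f e < fiberCount I a b f (e + 1) := by
  have hne : (fiberSlice I a b f e).Nonempty := (Set.ncard_pos fiberSlice_finite).mp h
  have hbdd : BddAbove (fiberSlice I a b f e) := fiberSlice_finite.bddAbove
  set M := sSup (fiberSlice I a b f e)
  have hM : M ∈ fiberSlice I a b f e := Nat.sSup_mem hne hbdd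
  have hM' : M + 1 ∉ fiberSlice I a b f e := fun h => by
    have := le_csSup hbdd h
    omega
  refine Set.ncard_lt_ncard ?_ fiberSlice_finite
  exact (Set.ssubset_iff_of_subset (fiberSlice_subset_fiberSlice_succ hI)).mpr
    ⟨M + 1, add_one_mem_fiberSlice_succ hI hM, hM'⟩

theorem isMonSet_compress : IsMonSet (Compress I a b) := by
  rw [isMonSet_iff_add_single_one_mem]
  rintro g ⟨f, p, q, hfa, hfb, rfl, hq⟩ i
  rcases eq_or_ne i a with rfl | hia
  · refine ⟨f, p + 1, q, hfa, hfb, by rw [single_add]; abel, ?_⟩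
    rw [add_right_comm]
    exact hq.trans_le (fiberCount_le_fiberCount_succ hI)
  rcases eq_or_ne i b with rfl | hib
  · refine ⟨f, p, q + 1, hfa, hfb, by rw [single_add]; abel, ?_⟩
    rw [← add_assoc]
    have := fiberCount_lt_fiberCount_succ hI (by omega : 0 < fiberCount I a i f (p + q))
    omega
  · refine ⟨f + single i 1, p, q, by simp [hfa, hia.symm], by simp [hfb, hib.symm], by abel, ?_⟩
    exact hq.trans_le (fiberCount_le_fiberCount_add_single hI i)

end IdealFibers

noncomputable def abSplit (a b : Fin n) (m : Mon n) : Mon n × ℕ := (eraseAB a b m, m a + m b)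

theorem add_single_sub_add_single_injective (hab : a ≠ b) (hfb : f b = 0) (e : ℕ) :
    Function.Injective fun q => f + single a (e - q) + single b q := by
  intro q q' h
  have := congrArg (· b) h
  simp only at this
  rwa [add_single_add_single_apply_right hab hfb, add_single_add_single_apply_right hab hfb] at this

theorem inter_abSplit_preimage_singleton_eq_image (hab : a ≠ b) {S : Set (Mon n)}
    {W : Mon n → ℕ → Set ℕ} (hS : ∀ m, m ∈ S ↔ m b ∈ W (eraseAB a b m) (m a + m b))
    (hfa : f a = 0) (hfb : f b = 0) (hW : W f e ⊆ Set.Iic e) :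
    S ∩ abSplit a b ⁻¹' {(f, e)} = (fun q => f + single a (e - q) + single b q) '' W f e := by
  ext m
  constructor
  · rintro ⟨hm, hsplit⟩
    simp only [Set.mem_preimage, Set.mem_singleton_iff, abSplit, Prod.mk.injEq] at hsplit
    obtain ⟨rfl, rfl⟩ := hsplit
    refine ⟨m b, (hS m).mp hm, ?_⟩
    dsimp only
    rw [Nat.add_sub_cancel, eraseAB_add_single_add_single_eq_self hab]
  · rintro ⟨q, hq, rfl⟩
    have hqe : q ≤ e := hW hq
    have hsplit : abSplit a b (f + single a (e - q) + single b q) = (f, e) := by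
      rw [abSplit, eraseAB_add_single_add_single hfa hfb, add_single_add_single_apply_left hab hfa,
        add_single_add_single_apply_right hab hfb, Nat.sub_add_cancel hqe]
    refine ⟨(hS _).mpr ?_, hsplit⟩
    obtain ⟨hf, he⟩ := Prod.ext_iff.mp hsplit
    dsimp only [abSplit] at hf he ⊢
    rwa [hf, he, add_single_add_single_apply_right hab hfb]

theorem setOf_mem_and_mdeg_eq (hab : a ≠ b) (X : Set (Mon n)) (d : ℕ) :
    {m | m ∈ X ∧ mdeg m = d} =
      X ∩ abSplit a b ⁻¹' {y | y.1 a = 0 ∧ y.1 b = 0 ∧ mdeg y.1 + y.2 = d} := by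
  ext m
  simp [abSplit, mdeg_eq_mdeg_eraseAB_add hab m]

theorem ncard_compress_mdeg_eq (hab : a ≠ b) (d : ℕ) :
    {m | m ∈ I ∧ mdeg m = d}.ncard = {m | m ∈ Compress I a b ∧ mdeg m = d}.ncard := by
  have fiber_I (f : Mon n) (e : ℕ) (hfa : f a = 0) (hfb : f b = 0) :
      I ∩ abSplit a b ⁻¹' {(f, e)} =
        (fun q => f + single a (e - q) + single b q) '' fiberSlice I a b f e :=
    inter_abSplit_preimage_singleton_eq_image hab (mem_iff_mem_fiberSlice hab) hfa hfb
      fiberSlice_subset_Iic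
  have fiber_compress (f : Mon n) (e : ℕ) (hfa : f a = 0) (hfb : f b = 0) :
      Compress I a b ∩ abSplit a b ⁻¹' {(f, e)} =
        (fun q => f + single a (e - q) + single b q) '' Set.Iio (fiberCount I a b f e) :=
    inter_abSplit_preimage_singleton_eq_image (W := fun f e => Set.Iio (fiberCount I a b f e))
      hab (mem_compress_iff hab) hfa hfb
      (fun q hq => Nat.lt_succ_iff.mp (hq.trans_le fiberCount_le_succ))
  rw [setOf_mem_and_mdeg_eq hab, setOf_mem_and_mdeg_eq hab]
  apply ncard_inter_preimage_eq_of_ncard_fiber_eq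
  · rintro ⟨f, e⟩ ⟨hfa : f a = 0, hfb : f b = 0, -⟩
    rw [fiber_I f e hfa hfb]
    exact fiberSlice_finite.image _
  · rintro ⟨f, e⟩ ⟨hfa : f a = 0, hfb : f b = 0, -⟩
    rw [fiber_compress f e hfa hfb]
    exact (Set.finite_Iio _).image _
  · rintro ⟨f, e⟩ ⟨hfa : f a = 0, hfb : f b = 0, -⟩
    rw [fiber_I f e hfa hfb, fiber_compress f e hfa hfb,
      Set.ncard_image_of_injective _ (add_single_sub_add_single_injective hab hfb e),
      Set.ncard_image_of_injective _ (add_single_sub_add_single_injective hab hfb e),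
      Set.ncard_Iio_nat, fiberCount_eq_ncard_fiberSlice]

end Compression

/-- The `{a,b}`-compression of a monomial ideal is a monomial ideal with the same
Hilbert function. -/
theorem stmt8 {n : ℕ} (I : Set (Mon n)) (hmon : IsMonSet I)
    (a b : Fin n) (hab : a < b) :
    IsMonSet (Compress I a b) ∧
    ∀ d : ℕ, Set.ncard {m : Mon n | m ∈ I ∧ mdeg m = d} =
      Set.ncard {m : Mon n | m ∈ Compress I a b ∧ mdeg m = d} :=
  ⟨isMonSet_compress hmon, ncard_compress_mdeg_eq hab.ne⟩
end
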